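/- arXiv:2012.05880 — 7 statements merged into one kernel-verified Lean document; each statement's English description precedes it below -/
import Mathlib

section
/- Let d ≥ 2. Suppose (v,M) ∈ ℝ^d ⊕ so(d,ℝ) satisfies the cross-section conditions: v_j = 0 for 1 ≤ j ≤ d−1, v_d > 0, M_{j,j+1} > 0 for 1 ≤ j ≤ d−1, and M_{j,k} = 0 for all k > j+1. If A ∈ O_d(ℝ) is such that the pair (A v, A M Aᵀ) also satisfies these cross-section conditions, then A is the identity matrix. (Uniqueness part of the main theorem: the cross-section K_{d;≤n} meets each O_d(ℝ)-orbit in at most one point.) -/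
/-!
Since `Aᵀ A = 1`, the cross-section conditions for `(A v, A M Aᵀ)` say `A M = N A` with `N = A M Aᵀ`
of the same Hessenberg shape as `M`. The columns of `A` are then shown to be the standard basis
vectors from the last one down. The last column is forced by `v` and `A v` both being positive
multiples of `e_d`. If the columns after `i` are basis vectors, the entry `(j, i + 1)` of
`A M = N A` reads `A j i * M i (i + 1) = N j (i + 1)` for `j ≤ i`; this kills `A j i` for `j < i`
and makes `A i i` positive, while orthogonality to the later columns kills `A j i` for `j > i`.
A unit column with a single positive entry is a basis vector.
-/

open Matrix

namespace Matrix

variable {n R : Type*} [Fintype n] [DecidableEq n]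

theorem transpose_apply_eq_single_of_transpose_mul_self_eq_one
    [Field R] [LinearOrder R] [IsStrictOrderedRing R] {A : Matrix n n R}
    (hA : Aᵀ * A = 1) {i : n} (hzero : ∀ j, j ≠ i → A j i = 0) (hpos : 0 < A i i) :
    Aᵀ i = Pi.single i 1 := by
  have hnorm : A i i * A i i = 1 := by
    have h := congr_fun₂ hA i i
    rwa [mul_apply, Finset.sum_eq_single i (fun l _ hl => by rw [transpose_apply, hzero l hl,
      zero_mul]) (by simp), transpose_apply, one_apply_eq] at h
  have hone : A i i = 1 := by nlinarith
  funext j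
  by_cases hj : j = i
  · subst hj; simp [hone]
  · simp [hj, hzero j hj]

theorem transpose_mul_self_apply_of_transpose_apply_eq_single [CommSemiring R]
    {A : Matrix n n R} {j : n} (hj : Aᵀ j = Pi.single j 1) (i : n) :
    (Aᵀ * A) i j = A j i := by
  have hcol : ∀ l, A l j = (Pi.single j 1 : n → R) l := fun l => congr_fun hj l
  simp [mul_apply, hcol, Pi.single_apply]

theorem transpose_apply_eq_single_of_mulVec
    [Field R] [LinearOrder R] [IsStrictOrderedRing R] {A : Matrix n n R}
    (hA : Aᵀ * A = 1) {v : n → R} {k : n} (hv : ∀ j, j ≠ k → v j = 0) (hvk : 0 < v k)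
    (hAv : ∀ j, j ≠ k → (A *ᵥ v) j = 0) (hAvk : 0 < (A *ᵥ v) k) :
    Aᵀ k = Pi.single k 1 := by
  have hmulVec : ∀ j, (A *ᵥ v) j = A j k * v k := fun j =>
    Finset.sum_eq_single k (fun l _ hl => by rw [hv l hl, mul_zero]) (by simp)
  refine transpose_apply_eq_single_of_transpose_mul_self_eq_one hA (fun j hj => ?_) ?_
  · have h := hAv j hj
    rw [hmulVec] at h
    exact (mul_eq_zero.mp h).resolve_right hvk.ne'
  · rw [hmulVec] at hAvk
    exact pos_of_mul_pos_left hAvk hvk.le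

end Matrix

section CrossSection

variable {d : ℕ} {R : Type*} [Field R] [LinearOrder R] [IsStrictOrderedRing R]
  {A M N : Matrix (Fin d) (Fin d) R}

theorem mul_apply_succ_eq_of_transpose_apply_eq_single (hAM : A * M = N * A)
    (hM : ∀ j k : Fin d, (j : ℕ) + 1 < (k : ℕ) → M j k = 0) {i i' : Fin d}
    (hi' : (i' : ℕ) = i + 1) (hcols : ∀ m, i < m → Aᵀ m = Pi.single m 1)
    {j : Fin d} (hji : j ≤ i) :
    A j i * M i i' = N j i' := by
  have hcol : ∀ m, i < m → ∀ l, A l m = (Pi.single m 1 : Fin d → R) l := fun m hm l =>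
    congr_fun (hcols m hm) l
  have hAM_apply := congr_fun₂ hAM j i'
  rwa [mul_apply, mul_apply,
    Finset.sum_eq_single i (fun l _ hl => ?_) (by simp),
    Finset.sum_eq_single i' (fun l _ hl => by rw [hcol i' (by grind) l, Pi.single_eq_of_ne hl,
      mul_zero]) (by simp),
    hcol i' (by grind), Pi.single_eq_same, mul_one] at hAM_apply
  rcases lt_or_gt_of_ne hl with hli | hil
  · rw [hM l i' (by grind), mul_zero]
  · rw [hcol l hil, Pi.single_eq_of_ne (by grind), zero_mul]

theorem transpose_apply_eq_single_of_hessenberg (hA : Aᵀ * A = 1) (hAM : A * M = N * A)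
    (hM : ∀ j k : Fin d, (j : ℕ) + 1 < (k : ℕ) → M j k = 0)
    (hN : ∀ j k : Fin d, (j : ℕ) + 1 < (k : ℕ) → N j k = 0)
    {i i' : Fin d} (hi' : (i' : ℕ) = i + 1) (hMpos : 0 < M i i') (hNpos : 0 < N i i')
    (hcols : ∀ m, i < m → Aᵀ m = Pi.single m 1) :
    Aᵀ i = Pi.single i 1 := by
  have hentry := fun j (hji : j ≤ i) =>
    mul_apply_succ_eq_of_transpose_apply_eq_single hAM hM hi' hcols hji
  refine transpose_apply_eq_single_of_transpose_mul_self_eq_one hA (fun j hj => ?_) ?_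
  · rcases lt_or_gt_of_ne hj with hji | hij
    · have h := hentry j hji.le
      rw [hN j i' (by grind)] at h
      exact (mul_eq_zero.mp h).resolve_right hMpos.ne'
    · rw [← transpose_mul_self_apply_of_transpose_apply_eq_single (hcols j hij), hA,
        one_apply_ne hj.symm]
  · rw [← hentry i le_rfl] at hNpos
    exact pos_of_mul_pos_left hNpos hMpos.le

end CrossSection

/-- Uniqueness part of the main theorem: if `(v, M)` satisfies the
cross-section conditions and `A ∈ O_d(ℝ)` is such that `(A v, A M Aᵀ)` also satisfies
them, then `A = 1`. (Indices here are 0-based; the paper's 1-based index `j` corresponds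
to `j - 1`.) -/
theorem stmt0 {d : ℕ} (hd : 2 ≤ d)
    (v : Fin d → ℝ) (M A : Matrix (Fin d) (Fin d) ℝ)
    (hA : A * Aᵀ = 1)
    (hv1 : ∀ j : Fin d, (j : ℕ) + 1 < d → v j = 0)
    (hv2 : 0 < v ⟨d - 1, by omega⟩)
    (hM1 : ∀ j k : Fin d, (k : ℕ) = (j : ℕ) + 1 → 0 < M j k)
    (hM2 : ∀ j k : Fin d, (j : ℕ) + 1 < (k : ℕ) → M j k = 0)
    (hv1' : ∀ j : Fin d, (j : ℕ) + 1 < d → A.mulVec v j = 0)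
    (hv2' : 0 < A.mulVec v ⟨d - 1, by omega⟩)
    (hM1' : ∀ j k : Fin d, (k : ℕ) = (j : ℕ) + 1 → 0 < (A * M * Aᵀ) j k)
    (hM2' : ∀ j k : Fin d, (j : ℕ) + 1 < (k : ℕ) → (A * M * Aᵀ) j k = 0) :
    A = 1 := by
  have hAtA : Aᵀ * A = 1 := mul_eq_one_comm.mp hA
  have hAM : A * M = A * M * Aᵀ * A := by rw [Matrix.mul_assoc _ Aᵀ, hAtA, Matrix.mul_one]
  have hcols : ∀ i : Fin d, Aᵀ i = Pi.single i 1 := by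
    intro i
    induction i using WellFoundedGT.induction with
    | _ i ih =>
      by_cases hi : (i : ℕ) + 1 < d
      · exact transpose_apply_eq_single_of_hessenberg hAtA hAM hM2 hM2' (i' := ⟨i + 1, hi⟩) rfl
          (hM1 _ _ rfl) (hM1' _ _ rfl) ih
      · have hlt : ∀ j : Fin d, j ≠ ⟨d - 1, by omega⟩ → (j : ℕ) + 1 < d := fun j hj => by
          grind [Fin.val_ne_of_ne hj]
        have hlast : (⟨d - 1, by omega⟩ : Fin d) = i := Fin.ext (by simp only; omega)
        exact hlast ▸ transpose_apply_eq_single_of_mulVec hAtA (fun j hj => hv1 j (hlt j hj)) hv2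
          (fun j hj => hv1' j (hlt j hj)) hv2'
  rw [← transpose_eq_one]
  ext i j
  exact (congr_fun (hcols i) j).trans one_eq_pi_single.symm
end

section
/- Let d ≥ 2, α > 0 and β_1,…,β_{d−1} > 0. Let v = α·e_d ∈ ℝ^d and let M ∈ so(d,ℝ) be the tridiagonal skew-symmetric matrix with M_{k,k+1} = β_k for 1 ≤ k ≤ d−1 and M_{j,k} = 0 for k > j+1. Then: (i) if H ∈ so(d,ℝ) satisfies (H v)_j = 0 for all 1 ≤ j ≤ d−1 and ([H,M])_{j,k} = 0 for all k > j+1, where [H,M] = HM − MH, then H = 0; and (ii) every pair (w,N) ∈ ℝ^d ⊕ so(d,ℝ) can be written uniquely as (w,N) = (H v, [H,M]) + (w', N') with H ∈ so(d,ℝ), w'_j = 0 for 1 ≤ j ≤ d−1, and N' ∈ so(d,ℝ) with N'_{j,k} = 0 for k > j+1. (Transversality of the orbit and the cross-section at points of the cross-section.) -/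
/-!
For skew `H` we have `(H v)_j = α H_{j,d}`, so the conditions on `H v` kill the last column
of `H`. If all columns to the right of `k` vanish, then `[H, M]_{j,k+1} = β_k H_{j,k}`, so the
conditions on `[H, M]` kill column `k` above the diagonal, and skew-symmetry kills the rest of it;
this is (i). For (ii), the coordinates that the tangent space of the cross-section sets to zero,
`w_j` (`j < d`) and `N_{jk}` (`k > j + 1`), are exactly as many as the dimension of `so(d)`;
arranged as a skew matrix `normalCoords (w, N)` they turn `H ↦ normalCoords (H v, [H, M])` into
an endomorphism of `so(d)`, injective by (i) and hence bijective.
-/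

open Matrix LieAlgebra.Orthogonal

attribute [local instance] LieRing.ofAssociativeRing

namespace OrbitSection

variable {K : Type*} [Field K] {d : ℕ}

def upperCoords : (Fin d → K) × Matrix (Fin d) (Fin d) K →ₗ[K] Matrix (Fin d) (Fin d) K where
  toFun p := of fun j k =>
    if (k : ℕ) = j + 1 then p.1 j else if (j : ℕ) + 1 < k then p.2 j k else 0
  map_add' p q := by
    ext j k
    simp only [of_apply, Matrix.add_apply, Prod.fst_add, Prod.snd_add, Pi.add_apply]
    split_ifs <;> simp
  map_smul' c p := by
    ext j k
    simp only [of_apply, Matrix.smul_apply, Prod.smul_fst, Prod.smul_snd, Pi.smul_apply,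
      RingHom.id_apply]
    split_ifs <;> simp

lemma upperCoords_apply (p : (Fin d → K) × Matrix (Fin d) (Fin d) K) (j k : Fin d) :
    upperCoords p j k =
      if (k : ℕ) = j + 1 then p.1 j else if (j : ℕ) + 1 < k then p.2 j k else 0 :=
  rfl

lemma upperCoords_apply_of_le (p : (Fin d → K) × Matrix (Fin d) (Fin d) K) {j k : Fin d}
    (hkj : k ≤ j) : upperCoords p j k = 0 := by
  rw [Fin.le_def] at hkj
  rw [upperCoords_apply, if_neg (by omega), if_neg (by omega)]

/-- A projection of `K^d × so(d)` onto `so(d)` along the tangent space of the cross-section. -/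
def normalCoords : (Fin d → K) × Matrix (Fin d) (Fin d) K →ₗ[K] Matrix (Fin d) (Fin d) K :=
  upperCoords - (transposeLinearEquiv (Fin d) (Fin d) K K).toLinearMap ∘ₗ upperCoords

lemma normalCoords_apply (p : (Fin d → K) × Matrix (Fin d) (Fin d) K) :
    normalCoords p = upperCoords p - (upperCoords p)ᵀ := rfl

lemma normalCoords_mem_so (p : (Fin d → K) × Matrix (Fin d) (Fin d) K) :
    normalCoords p ∈ so (Fin d) K := by
  rw [mem_so, normalCoords_apply, transpose_sub, transpose_transpose, neg_sub]

lemma normalCoords_eq_zero_iff (w : Fin d → K) (N : Matrix (Fin d) (Fin d) K) :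
    normalCoords (w, N) = 0 ↔
      (∀ j : Fin d, (j : ℕ) + 1 < d → w j = 0) ∧
        ∀ j k : Fin d, (j : ℕ) + 1 < k → N j k = 0 := by
  have hU : normalCoords (w, N) = 0 ↔ upperCoords (w, N) = 0 := by
    rw [normalCoords_apply, sub_eq_zero]
    refine ⟨fun h => ext fun j k => ?_, fun h => by rw [h, transpose_zero]⟩
    rcases le_or_gt k j with hkj | hjk
    · exact upperCoords_apply_of_le _ hkj
    · rw [h, transpose_apply, upperCoords_apply_of_le _ hjk.le, Matrix.zero_apply]
  rw [hU, ← Matrix.ext_iff]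
  simp only [upperCoords_apply, Matrix.zero_apply]
  constructor
  · intro h
    refine ⟨fun j hj => ?_, fun j k hjk => ?_⟩
    · simpa using h j ⟨j + 1, hj⟩
    · simpa [hjk.ne', hjk] using h j k
  · rintro ⟨hw, hN⟩ j k
    split_ifs with h1 h2
    · exact hw j (by omega)
    · exact hN j k h2
    · rfl

lemma diag_eq_zero_of_transpose_eq_neg [NeZero (2 : K)] {H : Matrix (Fin d) (Fin d) K}
    (hH : Hᵀ = -H) (j : Fin d) : H j j = 0 := by
  have h : H j j = -H j j := by simpa using congr_fun (congr_fun hH j) j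
  rw [eq_neg_iff_add_eq_zero, ← two_mul] at h
  exact (mul_eq_zero.1 h).resolve_left two_ne_zero

lemma mulVec_apply_of_eq_single_last {α : K} {v : Fin d → K}
    (hv : v = fun j : Fin d => if (j : ℕ) = d - 1 then α else 0)
    (H : Matrix (Fin d) (Fin d) K) {k : Fin d} (hk : (k : ℕ) = d - 1) (j : Fin d) :
    (H *ᵥ v) j = H j k * α := by
  have : v = Pi.single k α := by
    ext i
    simp [hv, Pi.single_apply, Fin.ext_iff, hk]
  simp [this]

lemma commutator_apply_of_cols_eq_zero {β : Fin d → K} {M H : Matrix (Fin d) (Fin d) K}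
    (hMsup : ∀ j k : Fin d, (k : ℕ) = (j : ℕ) + 1 → M j k = β j)
    (hMzero : ∀ j k : Fin d, (j : ℕ) + 1 < (k : ℕ) → M j k = 0)
    {k k' : Fin d} (hk' : (k' : ℕ) = k + 1) (hcols : ∀ i l : Fin d, k < l → H i l = 0)
    (j : Fin d) : (H * M - M * H) j k' = H j k * β k := by
  have hkk' : k < k' := by rw [Fin.lt_def]; omega
  have hHM : (H * M) j k' = H j k * M k k' := by
    rw [mul_apply]
    refine Finset.sum_eq_single k (fun l _ hlk => ?_) (fun hk => absurd (Finset.mem_univ k) hk)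
    rcases lt_or_gt_of_ne hlk with hlk | hkl
    · rw [hMzero l k' (by rw [Fin.lt_def] at hlk; omega), mul_zero]
    · rw [hcols j l hkl, zero_mul]
  have hMH : (M * H) j k' = 0 := by
    rw [mul_apply]
    exact Finset.sum_eq_zero fun l _ => by rw [hcols l k' hkk', mul_zero]
  rw [Matrix.sub_apply, hHM, hMH, sub_zero, hMsup k k' hk']

theorem eq_zero_of_tangent_mem_crossSection [NeZero (2 : K)] {α : K} (hα : α ≠ 0)
    {β : Fin d → K} (hβ : ∀ j : Fin d, (j : ℕ) + 1 < d → β j ≠ 0)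
    {v : Fin d → K} (hv : v = fun j : Fin d => if (j : ℕ) = d - 1 then α else 0)
    {M : Matrix (Fin d) (Fin d) K}
    (hMsup : ∀ j k : Fin d, (k : ℕ) = (j : ℕ) + 1 → M j k = β j)
    (hMzero : ∀ j k : Fin d, (j : ℕ) + 1 < (k : ℕ) → M j k = 0)
    {H : Matrix (Fin d) (Fin d) K} (hH : Hᵀ = -H)
    (hHv : ∀ j : Fin d, (j : ℕ) + 1 < d → (H *ᵥ v) j = 0)
    (hHM : ∀ j k : Fin d, (j : ℕ) + 1 < (k : ℕ) → (H * M - M * H) j k = 0) :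
    H = 0 := by
  suffices hcol : ∀ k j, H j k = 0 from ext fun j k => hcol k j
  intro k
  induction k using WellFoundedGT.induction with
  | _ k ih =>
    intro j
    rcases lt_trichotomy j k with hjk | rfl | hkj
    · rw [Fin.lt_def] at hjk
      by_cases hk : (k : ℕ) + 1 < d
      · have h := hHM j ⟨k + 1, hk⟩ (by simp only; omega)
        rw [commutator_apply_of_cols_eq_zero hMsup hMzero rfl fun i l hl => ih l hl i] at h
        exact (mul_eq_zero.1 h).resolve_right (hβ k hk)
      · have h := hHv j (by omega)
        rw [mulVec_apply_of_eq_single_last hv H (k := k) (by omega)] at h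
        exact (mul_eq_zero.1 h).resolve_right hα
    · exact diag_eq_zero_of_transpose_eq_neg hH j
    · rw [← neg_eq_zero, ← Matrix.neg_apply, ← hH, transpose_apply, ih j hkj k]

def orbitTangent (v : Fin d → K) (M : Matrix (Fin d) (Fin d) K) :
    Matrix (Fin d) (Fin d) K →ₗ[K] (Fin d → K) × Matrix (Fin d) (Fin d) K :=
  ((mulVecBilin K K).flip v).prod (LinearMap.mulRight K M - LinearMap.mulLeft K M)

lemma orbitTangent_apply (v : Fin d → K) (M H : Matrix (Fin d) (Fin d) K) :
    orbitTangent v M H = (H *ᵥ v, H * M - M * H) := rfl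

def normalOrbitMap (v : Fin d → K) (M : Matrix (Fin d) (Fin d) K) :
    (so (Fin d) K).toSubmodule →ₗ[K] (so (Fin d) K).toSubmodule :=
  (normalCoords ∘ₗ orbitTangent v M).restrict fun _ _ => normalCoords_mem_so _

theorem normalOrbitMap_bijective [NeZero (2 : K)] {α : K} (hα : α ≠ 0)
    {β : Fin d → K} (hβ : ∀ j : Fin d, (j : ℕ) + 1 < d → β j ≠ 0)
    {v : Fin d → K} (hv : v = fun j : Fin d => if (j : ℕ) = d - 1 then α else 0)
    {M : Matrix (Fin d) (Fin d) K}
    (hMsup : ∀ j k : Fin d, (k : ℕ) = (j : ℕ) + 1 → M j k = β j)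
    (hMzero : ∀ j k : Fin d, (j : ℕ) + 1 < (k : ℕ) → M j k = 0) :
    Function.Bijective (normalOrbitMap v M) := by
  have hinj : Function.Injective (normalOrbitMap v M) := by
    rw [← LinearMap.ker_eq_bot, LinearMap.ker_eq_bot']
    rintro ⟨H, hH⟩ h
    obtain ⟨hHv, hHM⟩ := (normalCoords_eq_zero_iff _ _).1 (congr_arg Subtype.val h)
    exact Subtype.ext
      (eq_zero_of_tangent_mem_crossSection hα hβ hv hMsup hMzero ((mem_so _ _ _).1 hH) hHv hHM)
  exact ⟨hinj, LinearMap.injective_iff_surjective.1 hinj⟩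

theorem existsUnique_orbitTangent_add_crossSection {v : Fin d → K}
    {M : Matrix (Fin d) (Fin d) K} (hMskew : Mᵀ = -M)
    (hbij : Function.Bijective (normalOrbitMap v M))
    (w : Fin d → K) (N : Matrix (Fin d) (Fin d) K) (hN : Nᵀ = -N) :
    ∃! HwN : Matrix (Fin d) (Fin d) K × (Fin d → K) × Matrix (Fin d) (Fin d) K,
      HwN.1ᵀ = -HwN.1 ∧ HwN.2.2ᵀ = -HwN.2.2 ∧
      w = HwN.1 *ᵥ v + HwN.2.1 ∧
      N = (HwN.1 * M - M * HwN.1) + HwN.2.2 ∧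
      (∀ j : Fin d, (j : ℕ) + 1 < d → HwN.2.1 j = 0) ∧
      (∀ j k : Fin d, (j : ℕ) + 1 < (k : ℕ) → HwN.2.2 j k = 0) := by
  have hrem (H : Matrix (Fin d) (Fin d) K) :
      normalCoords (orbitTangent v M H) = normalCoords (w, N) ↔
        (∀ j : Fin d, (j : ℕ) + 1 < d → (w - H *ᵥ v) j = 0) ∧
        ∀ j k : Fin d, (j : ℕ) + 1 < k → (N - (H * M - M * H)) j k = 0 := by
    rw [eq_comm, ← sub_eq_zero, ← map_sub, orbitTangent_apply, Prod.mk_sub_mk,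
      normalCoords_eq_zero_iff]
  obtain ⟨⟨H, hH⟩, hHwN, huniq⟩ := hbij.existsUnique
    ⟨normalCoords (w, N), normalCoords_mem_so _⟩
  have hHM : (H * M - M * H)ᵀ = -(H * M - M * H) :=
    (mem_so _ _ _).1 ((so (Fin d) K).lie_mem hH ((mem_so _ _ _).2 hMskew))
  obtain ⟨hw', hN'⟩ := (hrem H).1 (congr_arg Subtype.val hHwN)
  refine ⟨(H, w - H *ᵥ v, N - (H * M - M * H)),
    ⟨(mem_so _ _ _).1 hH, ?_, ?_, ?_, hw', hN'⟩, ?_⟩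
  · rw [transpose_sub, hN, hHM, neg_sub_neg, neg_sub]
  · exact (add_sub_cancel _ _).symm
  · exact (add_sub_cancel _ _).symm
  rintro ⟨H', w', N'⟩ ⟨hH', -, hw_eq, hN_eq, hw'z, hN'z⟩
  obtain rfl : H' = H := congr_arg Subtype.val (huniq ⟨H', (mem_so _ _ _).2 hH'⟩
    (Subtype.ext ((hrem H').2 ⟨by simpa [hw_eq] using hw'z, by simpa [hN_eq] using hN'z⟩)))
  simp [hw_eq, hN_eq]

end OrbitSection

theorem stmt1_general {d : ℕ} (α : ℝ) (hα : 0 < α)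
    (β : Fin d → ℝ) (hβ : ∀ j : Fin d, (j : ℕ) + 1 < d → 0 < β j)
    (v : Fin d → ℝ) (hv : v = fun j : Fin d => if (j : ℕ) = d - 1 then α else 0)
    (M : Matrix (Fin d) (Fin d) ℝ) (hMskew : Mᵀ = -M)
    (hMsup : ∀ j k : Fin d, (k : ℕ) = (j : ℕ) + 1 → M j k = β j)
    (hMzero : ∀ j k : Fin d, (j : ℕ) + 1 < (k : ℕ) → M j k = 0) :
    (∀ H : Matrix (Fin d) (Fin d) ℝ, Hᵀ = -H →
      (∀ j : Fin d, (j : ℕ) + 1 < d → H.mulVec v j = 0) →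
      (∀ j k : Fin d, (j : ℕ) + 1 < (k : ℕ) → (H * M - M * H) j k = 0) →
      H = 0) ∧
    (∀ (w : Fin d → ℝ) (N : Matrix (Fin d) (Fin d) ℝ), Nᵀ = -N →
      ∃! HwN : Matrix (Fin d) (Fin d) ℝ × (Fin d → ℝ) × Matrix (Fin d) (Fin d) ℝ,
        HwN.1ᵀ = -HwN.1 ∧ HwN.2.2ᵀ = -HwN.2.2 ∧
        w = HwN.1.mulVec v + HwN.2.1 ∧
        N = (HwN.1 * M - M * HwN.1) + HwN.2.2 ∧
        (∀ j : Fin d, (j : ℕ) + 1 < d → HwN.2.1 j = 0) ∧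
        (∀ j k : Fin d, (j : ℕ) + 1 < (k : ℕ) → HwN.2.2 j k = 0)) := by
  have hβ' : ∀ j : Fin d, (j : ℕ) + 1 < d → β j ≠ 0 := fun j hj => (hβ j hj).ne'
  exact ⟨fun H hH =>
      OrbitSection.eq_zero_of_tangent_mem_crossSection hα.ne' hβ' hv hMsup hMzero hH,
    fun w N hN => OrbitSection.existsUnique_orbitTangent_add_crossSection hMskew
      (OrbitSection.normalOrbitMap_bijective hα.ne' hβ' hv hMsup hMzero) w N hN⟩

/-- Transversality of the orbit and the cross-section at a point
`(v, M)` of the cross-section, where `v = α • e_d` and `M` is the tridiagonal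
skew-symmetric matrix with superdiagonal entries `β`.
(i) The only skew-symmetric `H` with `(H v, [H, M])` tangent to the cross-section is `0`;
(ii) every `(w, N) ∈ ℝ^d ⊕ so(d, ℝ)` decomposes uniquely as `(H v, [H, M]) + (w', N')`
with `w', N'` tangent to the cross-section. (0-based indices.) -/
theorem stmt1 {d : ℕ} (hd : 2 ≤ d) (α : ℝ) (hα : 0 < α)
    (β : Fin d → ℝ) (hβ : ∀ j : Fin d, (j : ℕ) + 1 < d → 0 < β j)
    (v : Fin d → ℝ) (hv : v = fun j : Fin d => if (j : ℕ) = d - 1 then α else 0)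
    (M : Matrix (Fin d) (Fin d) ℝ) (hMskew : Mᵀ = -M)
    (hMsup : ∀ j k : Fin d, (k : ℕ) = (j : ℕ) + 1 → M j k = β j)
    (hMzero : ∀ j k : Fin d, (j : ℕ) + 1 < (k : ℕ) → M j k = 0) :
    (∀ H : Matrix (Fin d) (Fin d) ℝ, Hᵀ = -H →
      (∀ j : Fin d, (j : ℕ) + 1 < d → H.mulVec v j = 0) →
      (∀ j k : Fin d, (j : ℕ) + 1 < (k : ℕ) → (H * M - M * H) j k = 0) →
      H = 0) ∧
    (∀ (w : Fin d → ℝ) (N : Matrix (Fin d) (Fin d) ℝ), Nᵀ = -N →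
      ∃! HwN : Matrix (Fin d) (Fin d) ℝ × (Fin d → ℝ) × Matrix (Fin d) (Fin d) ℝ,
        HwN.1ᵀ = -HwN.1 ∧ HwN.2.2ᵀ = -HwN.2.2 ∧
        w = HwN.1.mulVec v + HwN.2.1 ∧
        N = (HwN.1 * M - M * HwN.1) + HwN.2.2 ∧
        (∀ j : Fin d, (j : ℕ) + 1 < d → HwN.2.1 j = 0) ∧
        (∀ j k : Fin d, (j : ℕ) + 1 < (k : ℕ) → HwN.2.2 j k = 0)) :=
  stmt1_general α hα β hβ v hv M hMskew hMsup hMzero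
end

section
/- Let (v,M), (v',M') ∈ ℝ³ ⊕ so(3,ℝ). Write c₁,c₂,c₃ for the entries of v and c₁₂ = M_{12}, c₁₃ = M_{13}, c₂₃ = M_{23}, and define the polynomials p₁ = c₁² + c₂² + c₃², p₂ = c₁²(c₁₂² + c₁₃²) + 2c₁c₂₃(c₁₃c₂ − c₁₂c₃) + c₂²(c₁₂² + c₂₃²) + 2c₁₂c₁₃c₂c₃ + c₃²(c₁₃² + c₂₃²), and p₃ = c₁c₂₃ − c₂c₁₃ + c₃c₁₂ (and similarly p₁', p₂', p₃' for (v',M')). Assume p₂(v,M) ≠ 0, p₃(v,M) ≠ 0, p₂(v',M') ≠ 0 and p₃(v',M') ≠ 0. Then there exists A ∈ O_3(ℝ) with A v = v' and A M Aᵀ = M' if and only if p₁ = p₁', p₂ = p₂', and p₃² = (p₃')². (The polynomial invariants p₁, p₂, p₃² characterize the equivalence class of a point of ℝ³ ⊕ so(3,ℝ) under O_3(ℝ) on this open set.) -/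
/-!
The invariance of `p₁ = |v|²`, `p₂ = |Mv|²` and `p₃² = p₁ · tr(MᵀM)/2 − p₂` under `O₃(ℝ)` gives
one direction. Conversely, the rows `v`, `p₃ (v × Mv)`, `Mv` of `frame v M` are pairwise
orthogonal, with Gram matrix `diag(p₁, p₃²p₁p₂, p₂)`, and in this frame `v` and `M` have
coordinates depending only on `p₁, p₂, p₃²`; scaling the middle row by `p₃` instead of
normalising it is what makes the sign of `p₃` disappear. Two points with the same invariants
therefore have frames `B, B'` with the same invertible Gram matrix `G` and the same
coordinates, and `A = B'ᵀ G⁻¹ B` is orthogonal and carries one point to the other.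
-/

open Matrix

noncomputable section

/-- `p₁ = c₁² + c₂² + c₃²` for `v = (c₁, c₂, c₃)`. -/
def p1 (v : Fin 3 → ℝ) : ℝ := v 0 ^ 2 + v 1 ^ 2 + v 2 ^ 2

/-- `p₂` in the coordinates `c₁ = v 0, c₂ = v 1, c₃ = v 2, c₁₂ = M 0 1, c₁₃ = M 0 2,
c₂₃ = M 1 2`. -/
def p2 (v : Fin 3 → ℝ) (M : Matrix (Fin 3) (Fin 3) ℝ) : ℝ :=
  v 0 ^ 2 * (M 0 1 ^ 2 + M 0 2 ^ 2) + 2 * v 0 * M 1 2 * (M 0 2 * v 1 - M 0 1 * v 2)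
    + v 1 ^ 2 * (M 0 1 ^ 2 + M 1 2 ^ 2) + 2 * M 0 1 * M 0 2 * v 1 * v 2
    + v 2 ^ 2 * (M 0 2 ^ 2 + M 1 2 ^ 2)

/-- `p₃ = c₁c₂₃ − c₂c₁₃ + c₃c₁₂`. -/
def p3 (v : Fin 3 → ℝ) (M : Matrix (Fin 3) (Fin 3) ℝ) : ℝ :=
  v 0 * M 1 2 - v 1 * M 0 2 + v 2 * M 0 1

section Orthogonal

variable {m n K : Type*} [Fintype n] [CommRing K]

lemma transpose_conj_of_transpose_eq_neg {M : Matrix n n K} (hM : Mᵀ = -M)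
    (A : Matrix m n K) : (A * M * Aᵀ)ᵀ = -(A * M * Aᵀ) := by
  simp [transpose_mul, hM, Matrix.mul_assoc]

variable [DecidableEq n] {A : Matrix n n K}

lemma dotProduct_mulVec_mulVec_of_transpose_mul_self (hA : Aᵀ * A = 1) (x y : n → K) :
    A *ᵥ x ⬝ᵥ A *ᵥ y = x ⬝ᵥ y := by
  rw [dotProduct_mulVec, ← vecMul_transpose, vecMul_vecMul, hA, vecMul_one]

lemma conj_mulVec_mulVec (hA : Aᵀ * A = 1) (M : Matrix n n K) (x : n → K) :
    (A * M * Aᵀ) *ᵥ (A *ᵥ x) = A *ᵥ (M *ᵥ x) := by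
  rw [mulVec_mulVec, Matrix.mul_assoc, Matrix.mul_assoc, hA, Matrix.mul_one, ← mulVec_mulVec]

lemma trace_conj_mul_conj (hA : Aᵀ * A = 1) (M N : Matrix n n K) :
    trace (A * M * Aᵀ * (A * N * Aᵀ)) = trace (M * N) := by
  have : A * M * Aᵀ * (A * N * Aᵀ) = A * (M * N) * Aᵀ := by
    simp only [Matrix.mul_assoc, ← Matrix.mul_assoc Aᵀ A, hA, Matrix.one_mul]
  rw [this, trace_mul_cycle, hA, Matrix.one_mul]

end Orthogonal

lemma exists_orthogonal_of_mul_transpose_eq {n K : Type*} [Fintype n] [DecidableEq n] [Field K]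
    {v v' : n → K} {M M' B B' G : Matrix n n K}
    (hG : IsUnit G.det) (hB : B * Bᵀ = G) (hB' : B' * B'ᵀ = G)
    (hBv : B *ᵥ v = B' *ᵥ v') (hBM : B * M * Bᵀ = B' * M' * B'ᵀ) :
    ∃ A : Matrix n n K, A * Aᵀ = 1 ∧ A *ᵥ v = v' ∧ A * M * Aᵀ = M' := by
  have hGt : G⁻¹ᵀ = G⁻¹ := by
    rw [transpose_nonsing_inv, ← hB, transpose_mul, transpose_transpose]
  have hB'inv : B'ᵀ * G⁻¹ * B' = 1 :=
    mul_eq_one_comm.mp (by rw [← Matrix.mul_assoc, hB', mul_nonsing_inv G hG])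
  refine ⟨B'ᵀ * G⁻¹ * B, ?_, ?_, ?_⟩
  · calc B'ᵀ * G⁻¹ * B * (B'ᵀ * G⁻¹ * B)ᵀ
        = B'ᵀ * G⁻¹ * (B * Bᵀ) * G⁻¹ * B' := by
          simp only [transpose_mul, transpose_transpose, hGt, Matrix.mul_assoc]
      _ = 1 := by
          rw [hB, Matrix.mul_assoc (B'ᵀ * G⁻¹), mul_nonsing_inv G hG, Matrix.mul_one, hB'inv]
  · rw [← mulVec_mulVec, hBv, mulVec_mulVec, hB'inv, one_mulVec]
  · calc B'ᵀ * G⁻¹ * B * M * (B'ᵀ * G⁻¹ * B)ᵀ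
        = B'ᵀ * G⁻¹ * (B * M * Bᵀ) * G⁻¹ * B' := by
          simp only [transpose_mul, transpose_transpose, hGt, Matrix.mul_assoc]
      _ = (B'ᵀ * G⁻¹ * B') * M' * (B'ᵀ * G⁻¹ * B') := by
          rw [hBM]; simp only [Matrix.mul_assoc]
      _ = M' := by rw [hB'inv, Matrix.one_mul, Matrix.mul_one]

variable {v : Fin 3 → ℝ} {M : Matrix (Fin 3) (Fin 3) ℝ}

lemma entries_of_transpose_eq_neg (hM : Mᵀ = -M) :
    M 0 0 = 0 ∧ M 1 1 = 0 ∧ M 2 2 = 0 ∧ M 1 0 = -M 0 1 ∧ M 2 0 = -M 0 2 ∧ M 2 1 = -M 1 2 := by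
  have h i j : M j i = -M i j := congrFun (congrFun hM i) j
  refine ⟨?_, ?_, ?_, h 0 1, h 0 2, h 1 2⟩ <;> linarith [h 0 0, h 1 1, h 2 2]

lemma p1_eq_dotProduct (v : Fin 3 → ℝ) : p1 v = v ⬝ᵥ v := by
  simp [p1, dotProduct, Fin.sum_univ_three, sq]

lemma p2_eq_dotProduct (hM : Mᵀ = -M) : p2 v M = M *ᵥ v ⬝ᵥ M *ᵥ v := by
  obtain ⟨h00, h11, h22, h10, h20, h21⟩ := entries_of_transpose_eq_neg hM
  simp only [p2, mulVec, dotProduct, Fin.sum_univ_three, h00, h11, h22, h10, h20, h21]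
  ring

lemma two_mul_p3_sq (hM : Mᵀ = -M) :
    2 * p3 v M ^ 2 = -(p1 v * trace (M * M)) - 2 * p2 v M := by
  obtain ⟨h00, h11, h22, h10, h20, h21⟩ := entries_of_transpose_eq_neg hM
  simp only [p1, p2, p3, trace, diag, mul_apply, Fin.sum_univ_three,
    h00, h11, h22, h10, h20, h21]
  ring

lemma p1_ne_zero_of_p3_ne_zero (h : p3 v M ≠ 0) : p1 v ≠ 0 := by
  rw [p1_eq_dotProduct, Ne, dotProduct_self_eq_zero]
  rintro rfl
  simp [p3] at h

section Invariance

variable {A : Matrix (Fin 3) (Fin 3) ℝ}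

lemma p1_mulVec (hA : Aᵀ * A = 1) : p1 (A *ᵥ v) = p1 v := by
  rw [p1_eq_dotProduct, p1_eq_dotProduct, dotProduct_mulVec_mulVec_of_transpose_mul_self hA]

lemma p2_conj (hA : Aᵀ * A = 1) (hM : Mᵀ = -M) : p2 (A *ᵥ v) (A * M * Aᵀ) = p2 v M := by
  rw [p2_eq_dotProduct (transpose_conj_of_transpose_eq_neg hM A), p2_eq_dotProduct hM,
    conj_mulVec_mulVec hA, dotProduct_mulVec_mulVec_of_transpose_mul_self hA]

lemma p3_sq_conj (hA : Aᵀ * A = 1) (hM : Mᵀ = -M) :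
    p3 (A *ᵥ v) (A * M * Aᵀ) ^ 2 = p3 v M ^ 2 := by
  have h := two_mul_p3_sq (v := A *ᵥ v) (transpose_conj_of_transpose_eq_neg hM A)
  rw [p1_mulVec hA, p2_conj hA hM, trace_conj_mul_conj hA, ← two_mul_p3_sq hM] at h
  linarith

end Invariance

def frame (v : Fin 3 → ℝ) (M : Matrix (Fin 3) (Fin 3) ℝ) : Matrix (Fin 3) (Fin 3) ℝ :=
  Matrix.of ![v, p3 v M • v ⨯₃ (M *ᵥ v), M *ᵥ v]

lemma frame_mul_transpose (hM : Mᵀ = -M) :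
    frame v M * (frame v M)ᵀ = diagonal ![p1 v, p3 v M ^ 2 * p1 v * p2 v M, p2 v M] := by
  obtain ⟨h00, h11, h22, h10, h20, h21⟩ := entries_of_transpose_eq_neg hM
  ext i j
  fin_cases i <;> fin_cases j <;>
    simp [frame, p1, p2, p3, mul_apply, Fin.sum_univ_three, cross_apply, mulVec, dotProduct,
      h00, h11, h22, h10, h20, h21] <;> ring

lemma frame_mulVec (hM : Mᵀ = -M) : frame v M *ᵥ v = ![p1 v, 0, 0] := by
  obtain ⟨h00, h11, h22, h10, h20, h21⟩ := entries_of_transpose_eq_neg hM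
  ext i
  fin_cases i <;>
    simp [frame, p1, p3, Fin.sum_univ_three, cross_apply, mulVec, dotProduct,
      h00, h11, h22, h10, h20, h21] <;> ring

lemma frame_mul_mul_transpose (hM : Mᵀ = -M) :
    frame v M * M * (frame v M)ᵀ =
      !![0, 0, -p2 v M; 0, 0, -(p2 v M * p3 v M ^ 2); p2 v M, p2 v M * p3 v M ^ 2, 0] := by
  obtain ⟨h00, h11, h22, h10, h20, h21⟩ := entries_of_transpose_eq_neg hM
  ext i j
  fin_cases i <;> fin_cases j <;>
    simp [frame, p2, p3, mul_apply, Fin.sum_univ_three, cross_apply, mulVec, vecMul, dotProduct,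
      h00, h11, h22, h10, h20, h21] <;> ring

lemma isUnit_det_frame_gram (hp2 : p2 v M ≠ 0) (hp3 : p3 v M ≠ 0) :
    IsUnit (diagonal ![p1 v, p3 v M ^ 2 * p1 v * p2 v M, p2 v M]).det := by
  have hp1 := p1_ne_zero_of_p3_ne_zero hp3
  simp [det_diagonal, Fin.prod_univ_three, hp1, hp2, hp3]

theorem stmt3_general (v v' : Fin 3 → ℝ) (M M' : Matrix (Fin 3) (Fin 3) ℝ)
    (hMskew : Mᵀ = -M) (hM'skew : M'ᵀ = -M')
    (hp2 : p2 v M ≠ 0) (hp3 : p3 v M ≠ 0) :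
    (∃ A : Matrix (Fin 3) (Fin 3) ℝ,
        A * Aᵀ = 1 ∧ A.mulVec v = v' ∧ A * M * Aᵀ = M') ↔
      (p1 v = p1 v' ∧ p2 v M = p2 v' M' ∧ (p3 v M) ^ 2 = (p3 v' M') ^ 2) := by
  constructor
  · rintro ⟨A, hA, rfl, rfl⟩
    have hA' : Aᵀ * A = 1 := mul_eq_one_comm.mp hA
    exact ⟨(p1_mulVec hA').symm, (p2_conj hA' hMskew).symm, (p3_sq_conj hA' hMskew).symm⟩
  · rintro ⟨h1, h2, h3⟩
    refine exists_orthogonal_of_mul_transpose_eq (B' := frame v' M')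
      (isUnit_det_frame_gram hp2 hp3) (frame_mul_transpose hMskew) ?_ ?_ ?_
    · rw [frame_mul_transpose hM'skew, h1, h2, h3]
    · rw [frame_mulVec hMskew, frame_mulVec hM'skew, h1]
    · rw [frame_mul_mul_transpose hMskew, frame_mul_mul_transpose hM'skew, h2, h3]

/-- On the open set `{p₂ ≠ 0, p₃ ≠ 0}`, the polynomial invariants
`p₁, p₂, p₃²` characterize the `O_3(ℝ)`-equivalence class of a point of `ℝ³ ⊕ so(3,ℝ)`. -/
theorem stmt3 (v v' : Fin 3 → ℝ) (M M' : Matrix (Fin 3) (Fin 3) ℝ)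
    (hMskew : Mᵀ = -M) (hM'skew : M'ᵀ = -M')
    (hp2 : p2 v M ≠ 0) (hp3 : p3 v M ≠ 0)
    (hp2' : p2 v' M' ≠ 0) (hp3' : p3 v' M' ≠ 0) :
    (∃ A : Matrix (Fin 3) (Fin 3) ℝ,
        A * Aᵀ = 1 ∧ A.mulVec v = v' ∧ A * M * Aᵀ = M') ↔
      (p1 v = p1 v' ∧ p2 v M = p2 v' M' ∧ (p3 v M) ^ 2 = (p3 v' M') ^ 2) :=
  stmt3_general v v' M M' hMskew hM'skew hp2 hp3
end
end

section
/- Let (v, c) ∈ ℝ² × ℝ with v = (c₁, c₂) ≠ (0,0) and c ≠ 0. Then the matrix ρ₂ := (1/√(c₁² + c₂²)) · [[sgn(c)·c₂, −sgn(c)·c₁], [c₁, c₂]] satisfies: (i) ρ₂ ∈ O_2(ℝ); (ii) ρ₂ v = (0, √(c₁² + c₂²))ᵀ; and (iii) det(ρ₂)·c = |c|; equivalently, identifying c with the skew-symmetric matrix M = [[0, c], [−c, 0]], one has ρ₂ M ρ₂ᵀ = [[0, |c|], [−|c|, 0]]. (The explicit moving frame for planar curves maps any generic point of ℝ² ⊕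 so(2,ℝ) to the cross-section {c₁ = 0, c₂ > 0, c₁₂ > 0}.) -/
/-!
Write `v = (a, b)`, `s = √(a² + b²)` and `t = sgn c`, so that `ρ₂ = s⁻¹ F` with
`F = [[t b, -t a], [a, b]]`. Since `t² = 1`, the rows of `F` are orthogonal of length `s`,
`F v = (0, s²)` and `det F = t s²`; dividing by `s > 0` gives (i), (ii) and `det ρ₂ = t`,
whence `det ρ₂ · c = sgn c · c = |c|`. The last claim holds for every `2 × 2` matrix `A`:
`A M Aᵀ` is the skew matrix with entry `det A · c`.
-/

open Matrix

namespace Real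

theorem sign_mul_self_eq_abs (c : ℝ) : sign c * c = |c| := by
  rcases lt_trichotomy c 0 with h | rfl | h
  · rw [sign_of_neg h, abs_of_neg h, neg_one_mul]
  · simp
  · rw [sign_of_pos h, abs_of_pos h, one_mul]

theorem sign_mul_sign_of_ne_zero {c : ℝ} (hc : c ≠ 0) : sign c * sign c = 1 := by
  rcases sign_apply_eq_of_ne_zero c hc with h | h <;> rw [h] <;> norm_num

end Real

namespace Matrix

variable {R : Type*} [CommRing R]

theorem mul_skewFinTwo_mul_transpose (A : Matrix (Fin 2) (Fin 2) R) (c : R) :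
    A * !![0, c; -c, 0] * Aᵀ = !![0, A.det * c; -(A.det * c), 0] := by
  rw [det_fin_two]
  ext i j
  fin_cases i <;> fin_cases j <;>
    simp only [mul_apply, Fin.sum_univ_two, transpose_apply, of_apply, cons_val', cons_val_zero,
      cons_val_one, cons_val_fin_one, Fin.isValue, Fin.zero_eta, Fin.mk_one] <;>
    ring

def planarFrame (t : R) (v : Fin 2 → R) : Matrix (Fin 2) (Fin 2) R :=
  !![t * v 1, -(t * v 0); v 0, v 1]

variable {t : R} (v : Fin 2 → R)

theorem planarFrame_mul_transpose (ht : t * t = 1) :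
    planarFrame t v * (planarFrame t v)ᵀ =
      (v 0 ^ 2 + v 1 ^ 2) • (1 : Matrix (Fin 2) (Fin 2) R) := by
  ext i j
  fin_cases i <;> fin_cases j <;>
    simp only [planarFrame, mul_apply, Fin.sum_univ_two, transpose_apply, of_apply, cons_val',
      cons_val_zero, cons_val_one, cons_val_fin_one, Fin.isValue, Fin.zero_eta, Fin.mk_one,
      Matrix.smul_apply, smul_eq_mul, one_apply_eq, one_apply_ne, ne_eq, zero_ne_one, one_ne_zero,
      not_false_eq_true]
  · linear_combination (v 0 ^ 2 + v 1 ^ 2) * ht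
  · ring
  · ring
  · ring

theorem planarFrame_mulVec : planarFrame t v *ᵥ v = ![0, v 0 ^ 2 + v 1 ^ 2] := by
  rw [planarFrame, mulVec_fin_two]
  simp only [of_apply, cons_val', cons_val_zero, cons_val_one, cons_val_fin_one, vecCons_inj,
    and_true]
  constructor <;> ring

theorem det_planarFrame : (planarFrame t v).det = t * (v 0 ^ 2 + v 1 ^ 2) := by
  rw [planarFrame, det_fin_two_of]
  ring

end Matrix

/-- the explicit moving frame for planar curves. For generic
`(v, c) ∈ ℝ² × ℝ` (identifying `so(2,ℝ)` with `ℝ` via `c ↦ [[0, c], [−c, 0]]`),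
the matrix `ρ₂` is orthogonal, rotates `v` onto the positive `y`-axis, and
`det(ρ₂)·c = |c|`; equivalently `ρ₂ M ρ₂ᵀ = [[0, |c|], [−|c|, 0]]`. -/
theorem stmt5 (v : Fin 2 → ℝ) (c : ℝ) (hv : v ≠ 0) (hc : c ≠ 0)
    (ρ : Matrix (Fin 2) (Fin 2) ℝ)
    (hρ : ρ = (1 / Real.sqrt (v 0 ^ 2 + v 1 ^ 2)) •
      !![Real.sign c * v 1, -(Real.sign c * v 0); v 0, v 1]) :
    ρ * ρᵀ = 1 ∧
    ρ.mulVec v = ![0, Real.sqrt (v 0 ^ 2 + v 1 ^ 2)] ∧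
    ρ.det * c = |c| ∧
    ρ * !![0, c; -c, 0] * ρᵀ = !![0, |c|; -|c|, 0] := by
  set s := Real.sqrt (v 0 ^ 2 + v 1 ^ 2)
  replace hρ : ρ = (1 / s) • planarFrame (Real.sign c) v := hρ
  have hnorm : 0 < v 0 ^ 2 + v 1 ^ 2 := by
    refine (by positivity : (0 : ℝ) ≤ _).lt_of_ne' fun h => hv (dotProduct_self_eq_zero.1 ?_)
    rw [vec2_dotProduct, ← h, sq, sq]
  have hs_sq : s ^ 2 = v 0 ^ 2 + v 1 ^ 2 := Real.sq_sqrt hnorm.le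
  have hs : s ≠ 0 := Real.sqrt_ne_zero'.2 hnorm
  have ht := Real.sign_mul_sign_of_ne_zero hc
  have hdet : ρ.det * c = |c| := by
    rw [hρ, det_smul, det_planarFrame, ← hs_sq, Fintype.card_fin, ← Real.sign_mul_self_eq_abs]
    field_simp
  refine ⟨?_, ?_, hdet, by rw [mul_skewFinTwo_mul_transpose, hdet]⟩
  · rw [hρ, transpose_smul, smul_mul_smul_comm, planarFrame_mul_transpose _ ht, ← hs_sq,
      smul_smul]
    field_simp
    rw [one_smul]
  · rw [hρ, smul_mulVec, planarFrame_mulVec, ← hs_sq, smul_vec2, smul_zero, smul_eq_mul]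
    congr 2
    field_simp
end

section
/- Let (v, c), (v', c') ∈ ℝ² × ℝ with v ≠ (0,0), v' ≠ (0,0), c ≠ 0 and c' ≠ 0. Then there exists A ∈ O_2(ℝ) with A v = v' and det(A)·c = c' if and only if ‖v‖² = ‖v'‖² and c² = (c')². (Two generic points of ℝ² ⊕ so(2,ℝ) are related by an orthogonal transformation if and only if the invariants c₁² + c₂² and c₁₂² agree.) -/
/-!
An orthogonal matrix preserves the dot product and has determinant `±1`, so both invariants are
preserved. Conversely, if `‖v‖ = ‖v'‖` then `v` is carried to `v'` both by a rotation
`!![a, -b; b, a]` and by a reflection `!![a, b; b, -a]` with `a² + b² = 1`; since `c' = ±c`,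
one of the two (determinant `1`, resp. `-1`) also carries `c` to `c'`.
-/

open Matrix

section Orthogonal

variable {n : Type*} [Fintype n] [DecidableEq n]

theorem dotProduct_self_mulVec_of_mul_transpose_eq_one {A : Matrix n n ℝ} (hA : A * Aᵀ = 1)
    (v : n → ℝ) : A *ᵥ v ⬝ᵥ A *ᵥ v = v ⬝ᵥ v := by
  rw [dotProduct_mulVec, ← vecMul_transpose, vecMul_vecMul, mul_eq_one_comm.mp hA, vecMul_one]

theorem det_sq_of_mul_transpose_eq_one {A : Matrix n n ℝ} (hA : A * Aᵀ = 1) : A.det ^ 2 = 1 := by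
  simpa [sq, det_transpose] using congrArg det hA

end Orthogonal

theorem dotProduct_self_fin_two (v : Fin 2 → ℝ) : v ⬝ᵥ v = v 0 ^ 2 + v 1 ^ 2 := by
  simp [dotProduct, Fin.sum_univ_two, sq]

section PlaneIsometries

def rotationMatrix (a b : ℝ) : Matrix (Fin 2) (Fin 2) ℝ := !![a, -b; b, a]

def reflectionMatrix (a b : ℝ) : Matrix (Fin 2) (Fin 2) ℝ := !![a, b; b, -a]

variable {a b : ℝ}

theorem rotationMatrix_mul_transpose (hab : a ^ 2 + b ^ 2 = 1) :
    rotationMatrix a b * (rotationMatrix a b)ᵀ = 1 := by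
  ext i j
  fin_cases i <;> fin_cases j <;> simp [rotationMatrix, mul_apply, Fin.sum_univ_two] <;> grind

theorem reflectionMatrix_mul_transpose (hab : a ^ 2 + b ^ 2 = 1) :
    reflectionMatrix a b * (reflectionMatrix a b)ᵀ = 1 := by
  ext i j
  fin_cases i <;> fin_cases j <;> simp [reflectionMatrix, mul_apply, Fin.sum_univ_two] <;> grind

theorem det_rotationMatrix (hab : a ^ 2 + b ^ 2 = 1) : (rotationMatrix a b).det = 1 := by
  rw [rotationMatrix, det_fin_two_of]
  linear_combination hab

theorem det_reflectionMatrix (hab : a ^ 2 + b ^ 2 = 1) : (reflectionMatrix a b).det = -1 := by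
  rw [reflectionMatrix, det_fin_two_of]
  linear_combination -hab

theorem rotationMatrix_mulVec (v : Fin 2 → ℝ) :
    rotationMatrix a b *ᵥ v = ![a * v 0 - b * v 1, b * v 0 + a * v 1] := by
  ext i
  fin_cases i <;> simp [rotationMatrix, mulVec, dotProduct, Fin.sum_univ_two]; ring

theorem reflectionMatrix_mulVec (v : Fin 2 → ℝ) :
    reflectionMatrix a b *ᵥ v = rotationMatrix a b *ᵥ ![v 0, -v 1] := by
  rw [rotationMatrix_mulVec]
  ext i
  fin_cases i <;> simp [reflectionMatrix, mulVec, dotProduct, Fin.sum_univ_two]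

theorem exists_rotationMatrix_mulVec_eq {v v' : Fin 2 → ℝ}
    (h : v 0 ^ 2 + v 1 ^ 2 = v' 0 ^ 2 + v' 1 ^ 2) :
    ∃ a b : ℝ, a ^ 2 + b ^ 2 = 1 ∧ rotationMatrix a b *ᵥ v = v' := by
  by_cases hv : v 0 ^ 2 + v 1 ^ 2 = 0
  · have hv0 : v = 0 := by ext i; fin_cases i <;> simp <;> nlinarith
    have hv'0 : v' = 0 := by ext i; fin_cases i <;> simp <;> nlinarith
    exact ⟨1, 0, by norm_num, by simp [hv0, hv'0]⟩
  -- `a + b i = v' / v` in complex notation.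
  refine ⟨(v 0 * v' 0 + v 1 * v' 1) / (v 0 ^ 2 + v 1 ^ 2),
    (v 0 * v' 1 - v 1 * v' 0) / (v 0 ^ 2 + v 1 ^ 2), ?_, ?_⟩
  · field_simp
    linear_combination (-(v 0 ^ 2 + v 1 ^ 2)) * h
  · rw [rotationMatrix_mulVec]
    ext i
    fin_cases i <;> simp <;> field_simp <;> ring

theorem exists_reflectionMatrix_mulVec_eq {v v' : Fin 2 → ℝ}
    (h : v 0 ^ 2 + v 1 ^ 2 = v' 0 ^ 2 + v' 1 ^ 2) :
    ∃ a b : ℝ, a ^ 2 + b ^ 2 = 1 ∧ reflectionMatrix a b *ᵥ v = v' := by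
  obtain ⟨a, b, hab, hrot⟩ := exists_rotationMatrix_mulVec_eq (v := ![v 0, -v 1]) (v' := v')
    (by simpa using h)
  exact ⟨a, b, hab, by rw [reflectionMatrix_mulVec, hrot]⟩

end PlaneIsometries

theorem stmt6_general (v v' : Fin 2 → ℝ) (c c' : ℝ) :
    (∃ A : Matrix (Fin 2) (Fin 2) ℝ,
        A * Aᵀ = 1 ∧ A.mulVec v = v' ∧ A.det * c = c') ↔
      (v 0 ^ 2 + v 1 ^ 2 = v' 0 ^ 2 + v' 1 ^ 2 ∧ c ^ 2 = c' ^ 2) := by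
  constructor
  · rintro ⟨A, hA, rfl, rfl⟩
    refine ⟨?_, ?_⟩
    · rw [← dotProduct_self_fin_two, ← dotProduct_self_fin_two,
        dotProduct_self_mulVec_of_mul_transpose_eq_one hA]
    · rw [mul_pow, det_sq_of_mul_transpose_eq_one hA, one_mul]
  · rintro ⟨hnorm, hc⟩
    rcases sq_eq_sq_iff_eq_or_eq_neg.mp hc.symm with rfl | rfl
    · obtain ⟨a, b, hab, hv⟩ := exists_rotationMatrix_mulVec_eq hnorm
      exact ⟨rotationMatrix a b, rotationMatrix_mul_transpose hab, hv,
        by rw [det_rotationMatrix hab, one_mul]⟩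
    · obtain ⟨a, b, hab, hv⟩ := exists_reflectionMatrix_mulVec_eq hnorm
      exact ⟨reflectionMatrix a b, reflectionMatrix_mul_transpose hab, hv,
        by rw [det_reflectionMatrix hab, neg_one_mul]⟩

/-- two generic points of `ℝ² ⊕ so(2,ℝ)` (identifying `so(2,ℝ)` with `ℝ`,
so that `O_2(ℝ)` acts by `A·(v, c) = (A v, det(A)·c)`) are related by an orthogonal
transformation if and only if the invariants `c₁² + c₂²` and `c₁₂²` agree. -/
theorem stmt6 (v v' : Fin 2 → ℝ) (c c' : ℝ)
    (hv : v ≠ 0) (hv' : v' ≠ 0) (hc : c ≠ 0) (hc' : c' ≠ 0) :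
    (∃ A : Matrix (Fin 2) (Fin 2) ℝ,
        A * Aᵀ = 1 ∧ A.mulVec v = v' ∧ A.det * c = c') ↔
      (v 0 ^ 2 + v 1 ^ 2 = v' 0 ^ 2 + v' 1 ^ 2 ∧ c ^ 2 = c' ^ 2) :=
  stmt6_general v v' c c'
end

section
/- Let d ≥ 3 and 1 ≤ i ≤ d−2. Let (v,M) ∈ ℂ^d ⊕ so(d,ℂ) belong to L_d^{(i)}, and suppose that Σ_{j=1}^{d−i} (M_{j, d−i+1})² ≠ 0. Then there exists B ∈ O_{d−i}(ℂ) such that, letting A ∈ O_d(ℂ) be the block-diagonal matrix with top-left (d−i)×(d−i) block B and bottom-right i×i block the identity, the pair (A v, A M Aᵀ) lies in L_d^{(i+1)} and moreover (A M Aᵀ)_{d−i, d−i+1} ≠ 0. (Inductive step in constructing the relative section: each generic point can be moved one step further down the chain of linear subspaces while preserving membership in the current one.) -/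
open Matrix

/-!
Let `w` be the part of column `d − i` of `M` in the first `d − i` rows, and `c² = w ⬝ᵥ w ≠ 0`.
A Householder reflection of the first `d − i` coordinates sends `w` to `c e_{d−i−1}` (the sign
of `c` is chosen so that the reflection vector `w − c e_{d−i−1}` is non-isotropic). It is the
identity on the last `i` coordinates, so conjugating by it turns each column `k ≥ d − i` of `M`
into its reflection: columns `k > d − i` vanish in the first `d − i` rows and are fixed, while
column `d − i` becomes `c e_{d−i−1}` there.
-/

/-- Membership of `(v, M)` in the linear subspace `L_d^{(i)}` (without the skew-symmetry
condition, which is stated separately): `v_j = 0` for all `j` except the last coordinate,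
and `M_{j,k} = 0` whenever `d − i + 2 ≤ k ≤ d` and `1 ≤ j ≤ k − 2` (1-based), i.e. in
0-based indices `d − i + 1 ≤ k` and `j + 1 < k`. -/
def memL (d i : ℕ) (v : Fin d → ℂ) (M : Matrix (Fin d) (Fin d) ℂ) : Prop :=
  (∀ j : Fin d, (j : ℕ) + 1 < d → v j = 0) ∧
  (∀ j k : Fin d, d - i + 1 ≤ (k : ℕ) → (j : ℕ) + 1 < (k : ℕ) → M j k = 0)

lemma IsSquare.exists_eq_mul_self_and_ne {K : Type*} [Field K] [NeZero (2 : K)] {s : K}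
    (hs : IsSquare s) (hs0 : s ≠ 0) (a : K) : ∃ c, s = c * c ∧ c ≠ a := by
  obtain ⟨r, rfl⟩ := hs
  by_cases hr : r = a
  · refine ⟨-r, (neg_mul_neg r r).symm, fun h => ?_⟩
    have hr0 : r ≠ 0 := by rintro rfl; exact hs0 (mul_zero 0)
    have : 2 * r = 0 := by linear_combination hr - h
    exact hr0 ((mul_eq_zero.mp this).resolve_left two_ne_zero)
  · exact ⟨r, rfl, hr⟩

namespace Matrix

variable {K n : Type*} [Field K] [Fintype n] [DecidableEq n]

def householder (u : n → K) : Matrix n n K := 1 - (2 / (u ⬝ᵥ u)) • vecMulVec u u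

lemma householder_apply (u : n → K) (j k : n) :
    householder u j k = (1 : Matrix n n K) j k - 2 / (u ⬝ᵥ u) * (u j * u k) := rfl

lemma householder_transpose (u : n → K) : (householder u)ᵀ = householder u := by
  rw [householder, transpose_sub, transpose_one, transpose_smul, transpose_vecMulVec]

lemma householder_mulVec (u x : n → K) :
    householder u *ᵥ x = x - (2 / (u ⬝ᵥ u) * (u ⬝ᵥ x)) • u := by
  rw [householder, sub_mulVec, one_mulVec, smul_mulVec, vecMulVec_mulVec, op_smul_eq_smul,
    smul_smul]

lemma householder_mul_self {u : n → K} (hu : u ⬝ᵥ u ≠ 0) :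
    householder u * householder u = 1 := by
  have h : 2 / (u ⬝ᵥ u) * (2 / (u ⬝ᵥ u)) * (u ⬝ᵥ u) = 2 * (2 / (u ⬝ᵥ u)) := by
    field_simp
  simp only [householder, sub_mul, mul_sub, one_mul, mul_one, smul_mul_smul,
    vecMulVec_mul_vecMulVec, vecMulVec_smul, smul_smul, h]
  module

lemma householder_mul_transpose {u : n → K} (hu : u ⬝ᵥ u ≠ 0) :
    householder u * (householder u)ᵀ = 1 := by
  rw [householder_transpose, householder_mul_self hu]

lemma householder_mulVec_of_dotProduct_eq_zero {u x : n → K} (h : u ⬝ᵥ x = 0) :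
    householder u *ᵥ x = x := by
  rw [householder_mulVec, h, mul_zero, zero_smul, sub_zero]

lemma householder_apply_of_left_eq_zero {u : n → K} {j : n} (h : u j = 0) (k : n) :
    householder u j k = (1 : Matrix n n K) j k := by
  rw [householder_apply, h, zero_mul, mul_zero, sub_zero]

lemma householder_apply_of_right_eq_zero {u : n → K} {k : n} (h : u k = 0) (j : n) :
    householder u j k = (1 : Matrix n n K) j k := by
  rw [householder_apply, h, mul_zero, mul_zero, sub_zero]

lemma sub_single_dotProduct_self {w : n → K} {c : K} (hc : w ⬝ᵥ w = c * c) (e : n) :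
    (w - Pi.single e c) ⬝ᵥ w = c * (c - w e) := by
  rw [sub_dotProduct, hc, single_dotProduct]
  ring

lemma dotProduct_self_sub_single {w : n → K} {c : K} (hc : w ⬝ᵥ w = c * c) (e : n) :
    (w - Pi.single e c) ⬝ᵥ (w - Pi.single e c) = 2 * (c * (c - w e)) := by
  rw [dotProduct_sub, sub_single_dotProduct_self hc, dotProduct_single, Pi.sub_apply,
    Pi.single_eq_same]
  ring

lemma householder_sub_single_mulVec {w : n → K} {c : K} (hc : w ⬝ᵥ w = c * c) {e : n}
    (hu : (w - Pi.single e c) ⬝ᵥ (w - Pi.single e c) ≠ 0) :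
    householder (w - Pi.single e c) *ᵥ w = Pi.single e c := by
  rw [dotProduct_self_sub_single hc] at hu
  rw [householder_mulVec, dotProduct_self_sub_single hc, sub_single_dotProduct_self hc,
    div_mul_eq_mul_div, div_self hu, one_smul, sub_sub_cancel]

lemma mul_transpose_apply_of_row_eq_one {R m : Type*} [NonAssocSemiring R] {A : Matrix n n R}
    {k : n} (h : ∀ l, A k l = (1 : Matrix n n R) k l) (N : Matrix m n R) (j : m) :
    (N * Aᵀ) j k = N j k := by
  simp [mul_apply, h, one_apply]

end Matrix

theorem exists_orthogonal_mulVec_eq_single {K n : Type*} [Field K] [NeZero (2 : K)]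
    [Fintype n] [DecidableEq n] {p : n → Prop} {w : n → K} (hw : ∀ l, ¬p l → w l = 0)
    (hsq : IsSquare (w ⬝ᵥ w)) (hw0 : w ⬝ᵥ w ≠ 0) {e : n} (he : p e) :
    ∃ (A : Matrix n n K) (c : K), c ≠ 0 ∧ A * Aᵀ = 1 ∧ A *ᵥ w = Pi.single e c ∧
      (∀ j k, ¬p j ∨ ¬p k → A j k = (1 : Matrix n n K) j k) ∧
      ∀ x, (∀ l, p l → x l = 0) → A *ᵥ x = x := by
  obtain ⟨c, hc, hce⟩ := hsq.exists_eq_mul_self_and_ne hw0 (w e)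
  have hc0 : c ≠ 0 := by rintro rfl; exact hw0 (hc.trans (mul_zero 0))
  set u := w - Pi.single e c
  have hu_supp : ∀ l, ¬p l → u l = 0 := fun l hl => by
    simp [u, hw l hl, show l ≠ e from fun h => hl (h ▸ he)]
  have hu : u ⬝ᵥ u ≠ 0 := by
    rw [dotProduct_self_sub_single hc]
    exact mul_ne_zero two_ne_zero (mul_ne_zero hc0 (sub_ne_zero.mpr hce))
  refine ⟨householder u, c, hc0, householder_mul_transpose hu,
    householder_sub_single_mulVec hc hu, ?_, fun x hx => ?_⟩
  · rintro j k (h | h)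
    exacts [householder_apply_of_left_eq_zero (hu_supp j h) k,
      householder_apply_of_right_eq_zero (hu_supp k h) j]
  · refine householder_mulVec_of_dotProduct_eq_zero (Finset.sum_eq_zero fun l _ => ?_)
    by_cases hl : p l
    · rw [hx l hl, mul_zero]
    · rw [hu_supp l hl, zero_mul]

/-- inductive step in constructing the relative section. If
`(v, M) ∈ L_d^{(i)}` is generic (the sum `Σ_{j=1}^{d−i} (M_{j, d−i+1})² ≠ 0`), then an
orthogonal block matrix `A = diag(B, 1)` with `B ∈ O_{d−i}(ℂ)` moves `(v, M)` into
`L_d^{(i+1)}` with `(A M Aᵀ)_{d−i, d−i+1} ≠ 0`. Here the block structure of `A` is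
expressed by requiring all entries in the last `i` rows and columns to agree with the
identity matrix. (0-based indices.) -/
theorem stmt8 {d : ℕ} (i : ℕ) (hi1 : 1 ≤ i) (hi2 : i ≤ d - 2)
    (v : Fin d → ℂ) (M : Matrix (Fin d) (Fin d) ℂ)
    (hL : memL d i v M)
    (hsum : ∑ j : Fin d, (if (j : ℕ) < d - i then (M j ⟨d - i, by omega⟩) ^ 2 else 0) ≠ 0) :
    ∃ A : Matrix (Fin d) (Fin d) ℂ,
      A * Aᵀ = 1 ∧
      (∀ j k : Fin d, (d - i ≤ (j : ℕ) ∨ d - i ≤ (k : ℕ)) →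
        A j k = if j = k then 1 else 0) ∧
      memL d (i + 1) (A.mulVec v) (A * M * Aᵀ) ∧
      (A * M * Aᵀ) ⟨d - i - 1, by omega⟩ ⟨d - i, by omega⟩ ≠ 0 := by
  set col : Fin d := ⟨d - i, by omega⟩
  set e : Fin d := ⟨d - i - 1, by omega⟩
  set w : Fin d → ℂ := fun l => if (l : ℕ) < d - i then M l col else 0
  have hw0 : w ⬝ᵥ w ≠ 0 := by
    refine ne_of_eq_of_ne (Finset.sum_congr rfl fun l _ => ?_) hsum
    simp only [w]
    split_ifs <;> ring
  obtain ⟨A, c, hc0, hA, hAw, hblock, hfix⟩ :=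
    exists_orthogonal_mulVec_eq_single (p := fun l : Fin d => (l : ℕ) < d - i)
      (fun l hl => if_neg hl) (IsAlgClosed.exists_eq_mul_self _) hw0 (e := e) (by simp [e]; omega)
  have hcols : ∀ j k : Fin d, d - i ≤ (k : ℕ) →
      (A * M * Aᵀ) j k = (A *ᵥ fun l => M l k) j :=
    fun j k hk => mul_transpose_apply_of_row_eq_one (fun l => hblock k l (.inl (by omega))) _ j
  have hcol : ∀ j : Fin d, (j : ℕ) < d - i →
      (A * M * Aᵀ) j col = (Pi.single e c : Fin d → ℂ) j := by
    intro j hj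
    have hsplit : (fun l => M l col) = w + fun l => M l col - w l := by ext; simp
    rw [hcols j col le_rfl, hsplit, mulVec_add, hAw, hfix _ fun l hl => by simp [w, hl]]
    simp [w, hj]
  refine ⟨A, hA, fun j k h => (hblock j k (by omega)).trans Matrix.one_apply, ⟨?_, ?_⟩, ?_⟩
  · rw [hfix v fun l hl => hL.1 l (by omega)]
    exact hL.1
  · intro j k hk hjk
    rcases (show d - i < (k : ℕ) ∨ (k : ℕ) = d - i by omega) with hk | hk
    · rw [hcols j k (by omega), hfix _ fun l hl => hL.2 l k (by omega) (by omega)]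
      exact hL.2 j k (by omega) hjk
    · obtain rfl : k = col := Fin.ext hk
      have hje : j ≠ e := by rintro rfl; simp [e, col] at hjk; omega
      rw [hcol j (by omega), Pi.single_eq_of_ne hje]
  · rw [hcol e (by simp [e]; omega), Pi.single_eq_same]
    exact hc0
end

section
/- Let d ≥ 2 and let M ∈ so(d,ℂ) be tridiagonal, i.e. M_{j,j+1} = c_j for 1 ≤ j ≤ d−1 (so M_{j+1,j} = −c_j) and M_{j,k} = 0 for k > j+1. Then for every 1 ≤ k < d: (a) (M^k)_{d−k, d} = Π_{i=1}^{k} c_{d−i}; (b) (M^k)_{j, d} = 0 for all 1 ≤ j < d−k; and (c) for each j > d−k, the entry (M^k)_{j, d} depends only on the values c_{d−1}, c_{d−2}, …, c_{d−k+1}: if M' is another such tridiagonal skew-symmetric matrix with M'_{d−l, d−l+1} = M_{d−l, d−l+1} for all 1 ≤ l ≤ k−1, then (M'^k)_{j,d} = (M^k)_{j,d} for all j > d−k. -/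
/-!
For a lower Hessenberg matrix `M` (zero above the superdiagonal), `(M ^ k) i j` is a sum over
index paths `i → ⋯ → j` of length `k` that rise by at most one per step. Hence it vanishes for
`j > i + k`, equals the product of the superdiagonal entries along the way for `j = i + k`, and for
`i, j ≥ r` with `j ≥ r + k - 1` it only involves the lower right block of `M` from `r` on. For a
skew-symmetric tridiagonal matrix that block is determined by its superdiagonal.
-/

open Matrix Finset

namespace Matrix

variable {R : Type*} {n : ℕ}

def IsLowerHessenberg [Zero R] (M : Matrix (Fin n) (Fin n) R) : Prop :=
  ∀ i j : Fin n, (i : ℕ) + 1 < j → M i j = 0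

section Semiring

variable [Semiring R] {M : Matrix (Fin n) (Fin n) R}

lemma IsLowerHessenberg.mul_apply_eq_zero (hM : M.IsLowerHessenberg)
    {A : Matrix (Fin n) (Fin n) R} {i j : Fin n} (hA : ∀ m : Fin n, (m : ℕ) ≤ i + 1 → A m j = 0) :
    (M * A) i j = 0 := by
  rw [mul_apply]
  refine sum_eq_zero fun m _ => ?_
  rcases le_or_gt (m : ℕ) (i + 1) with hm | hm
  · rw [hA m hm, mul_zero]
  · rw [hM i m hm, zero_mul]

lemma IsLowerHessenberg.mul_apply_of_forall_le_eq_zero (hM : M.IsLowerHessenberg)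
    {A : Matrix (Fin n) (Fin n) R} {i j : Fin n} (hi : (i : ℕ) + 1 < n)
    (hA : ∀ m : Fin n, (m : ℕ) ≤ i → A m j = 0) :
    (M * A) i j = M i ⟨i + 1, hi⟩ * A ⟨i + 1, hi⟩ j := by
  rw [mul_apply]
  refine sum_eq_single _ (fun m _ hm => ?_) fun h => absurd (mem_univ _) h
  rcases lt_trichotomy (m : ℕ) (i + 1) with h | h | h
  · rw [hA m (by omega), mul_zero]
  · exact absurd (Fin.ext h) hm
  · rw [hM i m h, zero_mul]

lemma IsLowerHessenberg.pow_apply_eq_zero (hM : M.IsLowerHessenberg) :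
    ∀ (k : ℕ) {i j : Fin n}, (i : ℕ) + k < j → (M ^ k) i j = 0
  | 0, _, _, h => one_apply_ne (Fin.ne_of_lt (by omega))
  | k + 1, _, _, h => by
    rw [pow_succ']
    exact hM.mul_apply_eq_zero fun m hm => hM.pow_apply_eq_zero k (by omega)

-- After its first step, a nonzero path of length `k` into column `j` stays at indices `> j - k`.
lemma IsLowerHessenberg.pow_apply_eq_of_lowerRight_eq {M' : Matrix (Fin n) (Fin n) R}
    (hM : M.IsLowerHessenberg) (hM' : M'.IsLowerHessenberg) {r : ℕ}
    (hMM' : ∀ a b : Fin n, r ≤ a → r ≤ b → M a b = M' a b) :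
    ∀ (k : ℕ) {i j : Fin n}, r ≤ i → r + k ≤ j + 1 → (M ^ k) i j = (M' ^ k) i j
  | 0, _, _, _, _ => rfl
  | k + 1, i, j, hi, hj => by
    simp only [pow_succ', mul_apply]
    refine sum_congr rfl fun m _ => ?_
    rcases lt_or_ge (m : ℕ) r with hm | hm
    · rw [hM.pow_apply_eq_zero k (by omega), hM'.pow_apply_eq_zero k (by omega), mul_zero,
        mul_zero]
    · rw [hMM' i m hi hm, hM.pow_apply_eq_of_lowerRight_eq hM' hMM' k hm (by omega)]

end Semiring

lemma IsLowerHessenberg.pow_apply_eq_prod_of_add_eq [CommSemiring R] {M : Matrix (Fin n) (Fin n) R}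
    (hM : M.IsLowerHessenberg) :
    ∀ (k : ℕ) {i j : Fin n} (_ : (i : ℕ) + k = j),
      (M ^ k) i j = ∏ t : Fin k, M ⟨i + t, by omega⟩ ⟨i + t + 1, by omega⟩
  | 0, i, j, h => by
    obtain rfl : i = j := Fin.ext h
    rw [pow_zero, one_apply_eq, Fin.prod_univ_zero]
  | k + 1, i, j, h => by
    rw [pow_succ', hM.mul_apply_of_forall_le_eq_zero (by omega)
        fun m hm => hM.pow_apply_eq_zero k (by omega),
      hM.pow_apply_eq_prod_of_add_eq k (by simp only; omega), Fin.prod_univ_succ]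
    congr 1
    refine prod_congr rfl fun t _ => ?_
    congr 1 <;> ext <;> simp only [Fin.val_succ] <;> omega

section Skew

variable [AddGroup R] {M : Matrix (Fin n) (Fin n) R}

lemma apply_eq_neg_apply_of_transpose_eq_neg (hskew : Mᵀ = -M) (a b : Fin n) :
    M a b = -M b a :=
  congr_fun (congr_fun hskew b) a

lemma IsLowerHessenberg.apply_eq_zero_of_transpose_eq_neg [IsAddTorsionFree R]
    (hM : M.IsLowerHessenberg) (hskew : Mᵀ = -M) {a b : Fin n}
    (hab : (a : ℕ) ≠ b + 1) (hba : (b : ℕ) ≠ a + 1) : M a b = 0 := by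
  rcases lt_trichotomy (a : ℕ) b with h | h | h
  · exact hM a b (by omega)
  · rw [Fin.ext h, ← self_eq_neg]
    exact apply_eq_neg_apply_of_transpose_eq_neg hskew b b
  · rw [apply_eq_neg_apply_of_transpose_eq_neg hskew, hM b a (by omega), neg_zero]

lemma IsLowerHessenberg.lowerRight_eq_of_superdiag_eq [IsAddTorsionFree R]
    {M' : Matrix (Fin n) (Fin n) R} (hM : M.IsLowerHessenberg) (hM' : M'.IsLowerHessenberg)
    (hskew : Mᵀ = -M) (hskew' : M'ᵀ = -M') {r : ℕ}
    (hsup : ∀ a b : Fin n, r ≤ a → (b : ℕ) = a + 1 → M a b = M' a b) :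
    ∀ a b : Fin n, r ≤ a → r ≤ b → M a b = M' a b := by
  intro a b ha hb
  by_cases hba : (b : ℕ) = a + 1
  · exact hsup a b ha hba
  by_cases hab : (a : ℕ) = b + 1
  · rw [apply_eq_neg_apply_of_transpose_eq_neg hskew,
      apply_eq_neg_apply_of_transpose_eq_neg hskew', hsup b a hb hab]
  rw [hM.apply_eq_zero_of_transpose_eq_neg hskew hab hba,
    hM'.apply_eq_zero_of_transpose_eq_neg hskew' hab hba]

end Skew

end Matrix

/-- powers of a tridiagonal skew-symmetric matrix. With 1-based indices
as in the paper (`c_j = M_{j, j+1}`), for `1 ≤ k < d`: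
(a) `(M^k)_{d−k, d} = Π_{i=1}^{k} c_{d−i}`;
(b) `(M^k)_{j, d} = 0` for `j < d − k`;
(c) for `j > d − k`, the entry `(M^k)_{j, d}` depends only on `c_{d−1}, …, c_{d−k+1}`.
Below indices are 0-based, so the 1-based pair `(j, k)` becomes `(j−1, k−1)`. -/
theorem stmt14 {d : ℕ}
    (M : Matrix (Fin d) (Fin d) ℂ) (hMskew : Mᵀ = -M)
    (hMtri : ∀ j k : Fin d, (j : ℕ) + 1 < (k : ℕ) → M j k = 0)
    (k : ℕ) (hk2 : k < d) :
    ((M ^ k) ⟨d - 1 - k, by omega⟩ ⟨d - 1, by omega⟩ =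
      ∏ i ∈ Finset.range k, M ⟨d - (i + 1) - 1, by omega⟩ ⟨d - (i + 1), by omega⟩) ∧
    (∀ j : Fin d, (j : ℕ) < d - 1 - k → (M ^ k) j ⟨d - 1, by omega⟩ = 0) ∧
    (∀ M' : Matrix (Fin d) (Fin d) ℂ, M'ᵀ = -M' →
      (∀ j k' : Fin d, (j : ℕ) + 1 < (k' : ℕ) → M' j k' = 0) →
      (∀ (l : ℕ) (_hl1 : 1 ≤ l) (_hl2 : l ≤ k - 1),
        M' ⟨d - l - 1, by omega⟩ ⟨d - l, by omega⟩ =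
          M ⟨d - l - 1, by omega⟩ ⟨d - l, by omega⟩) →
      ∀ j : Fin d, d - k ≤ (j : ℕ) →
        (M' ^ k) j ⟨d - 1, by omega⟩ = (M ^ k) j ⟨d - 1, by omega⟩) := by
  have hM : M.IsLowerHessenberg := hMtri
  refine ⟨?_, fun j hj => hM.pow_apply_eq_zero k (by simp only; omega), ?_⟩
  · rw [hM.pow_apply_eq_prod_of_add_eq k (by simp only; omega), prod_range,
      ← Equiv.prod_comp (Fin.revPerm : Equiv.Perm (Fin k))]
    refine prod_congr rfl fun t _ => ?_
    congr 1 <;> ext <;> simp only [Fin.revPerm_apply, Fin.val_rev] <;> omega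
  · intro M' hM'skew hM' hsup j hj
    have hblock := hM.lowerRight_eq_of_superdiag_eq hM' hMskew hM'skew (r := d - k)
      fun a b ha hb => by
        have := hsup (d - 1 - a) (by omega) (by omega)
        convert this.symm using 2 <;> ext <;> simp only <;> omega
    exact (hM.pow_apply_eq_of_lowerRight_eq hM' hblock k hj (by simp only; omega)).symm
end
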